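/- Fractional Taylor bound (first order): let ε ∈ (0,1), f(z) = Σ_{n≥0} a_n z^n, ρ > 0, and suppose A_2^{(1+ε)}(ρ) := Σ_{n≥2} n^{1+ε} |a_n| ρ^n < ∞. Then for any complex z with |z| ≤ ρ, |f(z) - f(ρ) - f'(ρ)(z - ρ)| ≤ (2^{1-ε}/(1+ε)) · A_2^{(1+ε)}(ρ) · |1 - z/ρ|^{1+ε}. -/

import Mathlib

/-!
Put `w = z / ρ`, so `‖w‖ ≤ 1`. The constant and linear terms cancel, and the `n`-th term of the
remainder is `a n ρ ^ n (w ^ n - 1 - n (w - 1)) = a n ρ ^ n (w - 1) ∑_{k<n} (w ^ k - 1)`.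
Interpolating between `‖w ^ k - 1‖ ≤ 2` and `‖w ^ k - 1‖ ≤ k ‖w - 1‖` gives
`‖w ^ k - 1‖ ≤ 2 ^ (1 - ε) k ^ ε ‖w - 1‖ ^ ε`, and `∑_{k<n} k ^ ε ≤ n ^ (1 + ε) / (1 + ε)` by
comparison with `∫₀ⁿ x ^ ε dx`.
-/

open Finset

lemma sum_range_natCast_rpow_le {ε : ℝ} (hε : 0 ≤ ε) (n : ℕ) :
    ∑ k ∈ range n, (k : ℝ) ^ ε ≤ (n : ℝ) ^ (1 + ε) / (1 + ε) := by
  have hmono : MonotoneOn (fun x : ℝ => x ^ ε) (Set.Icc 0 (0 + n)) :=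
    (Real.monotoneOn_rpow_Ici_of_exponent_nonneg hε).mono Set.Icc_subset_Ici_self
  calc ∑ k ∈ range n, (k : ℝ) ^ ε ≤ ∫ x in (0 : ℝ)..0 + n, x ^ ε := by
        simpa using hmono.sum_le_integral
    _ = (n : ℝ) ^ (1 + ε) / (1 + ε) := by
        rw [zero_add, integral_rpow (Or.inl (by linarith)), add_comm ε,
          Real.zero_rpow (by linarith), sub_zero]

lemma min_le_rpow_mul_rpow {a b θ : ℝ} (ha : 0 ≤ a) (hb : 0 ≤ b) (hθ0 : 0 ≤ θ)
    (hθ1 : θ ≤ 1) :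
    min a b ≤ a ^ (1 - θ) * b ^ θ := by
  have hm : 0 ≤ min a b := le_min ha hb
  calc min a b = min a b ^ (1 - θ) * min a b ^ θ := by
        rw [← Real.rpow_add' hm (by simp), sub_add_cancel, Real.rpow_one]
    _ ≤ a ^ (1 - θ) * b ^ θ := by
        have := sub_nonneg.2 hθ1
        gcongr
        exacts [min_le_left a b, min_le_right a b]

lemma summable_rpow_mul_of_le {s t : ℝ} (hts : t ≤ s) {b : ℕ → ℝ} (hb : ∀ n, 0 ≤ b n)
    (h : Summable fun n : ℕ => (n : ℝ) ^ s * b n) :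
    Summable fun n : ℕ => (n : ℝ) ^ t * b n := by
  refine h.of_norm_bounded_eventually ?_
  filter_upwards [Filter.eventually_cofinite_ne 0] with n hn
  rw [Real.norm_of_nonneg (mul_nonneg (by positivity) (hb n))]
  have hn1 : (1 : ℝ) ≤ n := Nat.one_le_cast.2 (Nat.one_le_iff_ne_zero.2 hn)
  exact mul_le_mul_of_nonneg_right (Real.rpow_le_rpow_of_exponent_le hn1 hts) (hb n)

section NormedRing

variable {R : Type*} [NormedCommRing R] [NormOneClass R] {w : R}

lemma norm_pow_le_one (hw : ‖w‖ ≤ 1) (k : ℕ) : ‖w ^ k‖ ≤ 1 :=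
  (norm_pow_le w k).trans (pow_le_one₀ (norm_nonneg w) hw)

lemma norm_pow_sub_one_le_mul (hw : ‖w‖ ≤ 1) (k : ℕ) : ‖w ^ k - 1‖ ≤ k * ‖w - 1‖ := by
  calc ‖w ^ k - 1‖ = ‖(∑ i ∈ range k, w ^ i) * (w - 1)‖ := by rw [geom_sum_mul]
    _ ≤ (∑ i ∈ range k, ‖w ^ i‖) * ‖w - 1‖ :=
        (norm_mul_le _ _).trans (by gcongr; exact norm_sum_le _ _)
    _ ≤ (∑ _i ∈ range k, (1 : ℝ)) * ‖w - 1‖ := by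
        gcongr with i; exact norm_pow_le_one hw i
    _ = k * ‖w - 1‖ := by simp

lemma norm_pow_sub_one_le_rpow {θ : ℝ} (hθ0 : 0 ≤ θ) (hθ1 : θ ≤ 1) (hw : ‖w‖ ≤ 1) (k : ℕ) :
    ‖w ^ k - 1‖ ≤ 2 ^ (1 - θ) * ‖w - 1‖ ^ θ * (k : ℝ) ^ θ := by
  have htwo : ‖w ^ k - 1‖ ≤ 2 := by
    linarith [norm_sub_le (w ^ k) 1, norm_pow_le_one hw k, norm_one (α := R)]
  calc ‖w ^ k - 1‖ ≤ min 2 (k * ‖w - 1‖) := le_min htwo (norm_pow_sub_one_le_mul hw k)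
    _ ≤ 2 ^ (1 - θ) * (k * ‖w - 1‖) ^ θ :=
        min_le_rpow_mul_rpow (by norm_num) (by positivity) hθ0 hθ1
    _ = 2 ^ (1 - θ) * ‖w - 1‖ ^ θ * (k : ℝ) ^ θ := by
        rw [Real.mul_rpow (Nat.cast_nonneg k) (norm_nonneg _)]; ring

lemma norm_pow_sub_one_sub_mul_le {ε : ℝ} (hε0 : 0 ≤ ε) (hε1 : ε ≤ 1) (hw : ‖w‖ ≤ 1)
    (n : ℕ) :
    ‖w ^ n - 1 - n * (w - 1)‖ ≤
      2 ^ (1 - ε) / (1 + ε) * (n : ℝ) ^ (1 + ε) * ‖w - 1‖ ^ (1 + ε) := by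
  have hid : w ^ n - 1 - n * (w - 1) = (∑ k ∈ range n, (w ^ k - 1)) * (w - 1) := by
    rw [sum_sub_distrib, sub_mul, geom_sum_mul]; simp
  calc ‖w ^ n - 1 - n * (w - 1)‖ ≤ (∑ k ∈ range n, ‖w ^ k - 1‖) * ‖w - 1‖ := by
        rw [hid]; exact (norm_mul_le _ _).trans (by gcongr; exact norm_sum_le _ _)
    _ ≤ (∑ k ∈ range n, 2 ^ (1 - ε) * ‖w - 1‖ ^ ε * (k : ℝ) ^ ε) * ‖w - 1‖ := by
        gcongr with k; exact norm_pow_sub_one_le_rpow hε0 hε1 hw k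
    _ ≤ 2 ^ (1 - ε) * ‖w - 1‖ ^ ε * ((n : ℝ) ^ (1 + ε) / (1 + ε)) * ‖w - 1‖ := by
        rw [← mul_sum]; gcongr; exact sum_range_natCast_rpow_le hε0 n
    _ = 2 ^ (1 - ε) / (1 + ε) * (n : ℝ) ^ (1 + ε) * ‖w - 1‖ ^ (1 + ε) := by
        rw [Real.rpow_one_add' (norm_nonneg _) (by linarith)]; ring

end NormedRing

lemma norm_pow_sub_pow_sub_mul_le {𝕜 : Type*} [NormedField 𝕜] {ε : ℝ} (hε0 : 0 ≤ ε)
    (hε1 : ε ≤ 1) {z r : 𝕜} (hr : r ≠ 0) (hz : ‖z‖ ≤ ‖r‖) (n : ℕ) :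
    ‖z ^ (n + 1) - r ^ (n + 1) - ((n + 1 : ℕ) : 𝕜) * r ^ n * (z - r)‖ ≤
      2 ^ (1 - ε) / (1 + ε) * ((n + 1 : ℕ) : ℝ) ^ (1 + ε) * ‖r‖ ^ (n + 1) *
        ‖1 - z / r‖ ^ (1 + ε) := by
  have hw : ‖z / r‖ ≤ 1 := by
    rw [norm_div]; exact div_le_one_of_le₀ hz (norm_nonneg r)
  have hscale : z ^ (n + 1) - r ^ (n + 1) - ((n + 1 : ℕ) : 𝕜) * r ^ n * (z - r) =
      r ^ (n + 1) * ((z / r) ^ (n + 1) - 1 - ((n + 1 : ℕ) : 𝕜) * (z / r - 1)) := by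
    rw [div_pow]; field_simp; ring
  rw [hscale, norm_mul, norm_pow, norm_sub_rev 1]
  calc ‖r‖ ^ (n + 1) * ‖(z / r) ^ (n + 1) - 1 - ((n + 1 : ℕ) : 𝕜) * (z / r - 1)‖
      ≤ ‖r‖ ^ (n + 1) * (2 ^ (1 - ε) / (1 + ε) * ((n + 1 : ℕ) : ℝ) ^ (1 + ε) *
          ‖z / r - 1‖ ^ (1 + ε)) := by
        gcongr; exact norm_pow_sub_one_sub_mul_le hε0 hε1 hw (n + 1)
    _ = _ := by ring

section Series

variable {𝕜 : Type*} [NormedField 𝕜] [CompleteSpace 𝕜] {a : ℕ → 𝕜}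

lemma summable_mul_pow_of_norm_le {r : ℝ} (h : Summable fun n => ‖a n‖ * r ^ n) {z : 𝕜}
    (hz : ‖z‖ ≤ r) : Summable fun n => a n * z ^ n :=
  h.of_norm_bounded fun n => by rw [norm_mul, norm_pow]; gcongr

lemma summable_succ_mul_coeff_mul_pow {r : 𝕜} (hr : r ≠ 0)
    (h : Summable fun n : ℕ => (n : ℝ) * (‖a n‖ * ‖r‖ ^ n)) :
    Summable fun n : ℕ => ((n : 𝕜) + 1) * a (n + 1) * r ^ n := by
  refine (((summable_nat_add_iff 1).2 h).mul_left ‖r‖⁻¹).of_norm_bounded fun n => ?_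
  have hcast : (n : 𝕜) + 1 = ((n + 1 : ℕ) : 𝕜) := by push_cast; rfl
  rw [norm_mul, norm_mul, norm_pow, hcast]
  calc ‖((n + 1 : ℕ) : 𝕜)‖ * ‖a (n + 1)‖ * ‖r‖ ^ n
      ≤ ((n + 1 : ℕ) : ℝ) * ‖a (n + 1)‖ * ‖r‖ ^ n := by
        gcongr; simpa using Nat.norm_cast_le (α := 𝕜) (n + 1)
    _ = ‖r‖⁻¹ * (((n + 1 : ℕ) : ℝ) * (‖a (n + 1)‖ * ‖r‖ ^ (n + 1))) := by
        field_simp [norm_ne_zero_iff.2 hr]; ring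

end Series

lemma first_order_remainder_eq_tsum {R : Type*} [CommRing R] [TopologicalSpace R]
    [IsTopologicalRing R] [T2Space R] (a : ℕ → R) (z r : R)
    (hz : Summable fun n => a n * z ^ n) (hr : Summable fun n => a n * r ^ n)
    (hd : Summable fun n : ℕ => ((n : R) + 1) * a (n + 1) * r ^ n) :
    (∑' n, a n * z ^ n) - (∑' n, a n * r ^ n)
        - (∑' n : ℕ, ((n : R) + 1) * a (n + 1) * r ^ n) * (z - r) =
      ∑' n : ℕ, a (n + 2) *
        (z ^ (n + 2) - r ^ (n + 2) - ((n + 2 : ℕ) : R) * r ^ (n + 1) * (z - r)) := by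
  have hd2 : Summable fun n : ℕ => ((n + 2 : ℕ) : R) * a (n + 2) * r ^ (n + 1) :=
    ((summable_nat_add_iff 1).2 hd).congr fun n => by push_cast; ring
  have hz2 := (summable_nat_add_iff 2).2 hz
  have hr2 := (summable_nat_add_iff 2).2 hr
  calc _ = (∑' n, a (n + 2) * z ^ (n + 2)) - (∑' n, a (n + 2) * r ^ (n + 2))
        - (∑' n : ℕ, ((n + 2 : ℕ) : R) * a (n + 2) * r ^ (n + 1)) * (z - r) := by
        have hshift : ∑' n : ℕ, (((n + 1 : ℕ) : R) + 1) * a (n + 1 + 1) * r ^ (n + 1) =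
            ∑' n : ℕ, ((n + 2 : ℕ) : R) * a (n + 2) * r ^ (n + 1) :=
          tsum_congr fun n => by push_cast; ring
        rw [← hz.sum_add_tsum_nat_add 2, ← hr.sum_add_tsum_nat_add 2, hd.tsum_eq_zero_add,
          hshift]
        simp only [sum_range_succ, sum_range_zero]
        push_cast
        ring
    _ = _ := by
        rw [← hd2.tsum_mul_right, ← hz2.tsum_sub hr2, ← (hz2.sub hr2).tsum_sub (hd2.mul_right _)]
        exact tsum_congr fun n => by ring

/-- Fractional Taylor bound (first order): if
`A_2^{(1+ε)}(ρ) = Σ_{n≥2} n^{1+ε} |a_n| ρ^n < ∞` and `ε ∈ (0,1)`, then for `|z| ≤ ρ`,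
`|f(z) - f(ρ) - f'(ρ)(z-ρ)| ≤ (2^{1-ε}/(1+ε)) A_2^{(1+ε)}(ρ) |1 - z/ρ|^{1+ε}`. -/
theorem fractional_taylor_first (ε ρ : ℝ) (hε : ε ∈ Set.Ioo (0 : ℝ) 1) (hρ : 0 < ρ)
    (a : ℕ → ℂ)
    (hA : Summable fun n : ℕ =>
      ((n + 2 : ℕ) : ℝ) ^ (1 + ε) * ‖a (n + 2)‖ * ρ ^ (n + 2))
    (z : ℂ) (hz : ‖z‖ ≤ ρ) :
    ‖(∑' n : ℕ, a n * z ^ n) - (∑' n : ℕ, a n * (ρ : ℂ) ^ n)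
        - (∑' n : ℕ, ((n : ℂ) + 1) * a (n + 1) * (ρ : ℂ) ^ n) * (z - ρ)‖
      ≤ (2 ^ (1 - ε) / (1 + ε)) *
          (∑' n : ℕ, ((n + 2 : ℕ) : ℝ) ^ (1 + ε) * ‖a (n + 2)‖ * ρ ^ (n + 2)) *
          ‖1 - z / (ρ : ℂ)‖ ^ (1 + ε) := by
  obtain ⟨hε0, hε1⟩ := hε
  have hρC : (ρ : ℂ) ≠ 0 := Complex.ofReal_ne_zero.2 hρ.ne'
  have hρn : ‖(ρ : ℂ)‖ = ρ := Complex.norm_of_nonneg hρ.le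
  have hA' : Summable fun n : ℕ => (n : ℝ) ^ (1 + ε) * (‖a n‖ * ρ ^ n) :=
    (summable_nat_add_iff 2).1 (by simpa only [mul_assoc] using hA)
  have hnonneg : ∀ n, 0 ≤ ‖a n‖ * ρ ^ n := fun n => by positivity
  have hpow : Summable fun n => ‖a n‖ * ρ ^ n := by
    simpa using summable_rpow_mul_of_le (t := 0) (by linarith) hnonneg hA'
  have hlin : Summable fun n : ℕ => (n : ℝ) * (‖a n‖ * ‖(ρ : ℂ)‖ ^ n) := by
    simpa [abs_of_pos hρ] using summable_rpow_mul_of_le (t := 1) (by linarith) hnonneg hA'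
  rw [first_order_remainder_eq_tsum a z ρ (summable_mul_pow_of_norm_le hpow hz)
    (summable_mul_pow_of_norm_le hpow hρn.le) (summable_succ_mul_coeff_mul_pow hρC hlin)]
  refine tsum_of_norm_bounded ((hA.hasSum.mul_left _).mul_right _) fun n => ?_
  calc _ ≤ ‖a (n + 2)‖ * (2 ^ (1 - ε) / (1 + ε) * ((n + 2 : ℕ) : ℝ) ^ (1 + ε) *
          ‖(ρ : ℂ)‖ ^ (n + 2) * ‖1 - z / ρ‖ ^ (1 + ε)) := by
        rw [norm_mul]; gcongr
        exact norm_pow_sub_pow_sub_mul_le hε0.le hε1.le hρC (hz.trans hρn.ge) (n + 1)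
    _ = _ := by rw [hρn]; ring
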